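/- Let f be a norm on ℝ^p, let (a, b) be a linear classifier with a ≠ 0, let x_F ∈ ℝ^p satisfy ⟪a, x_F⟫ < b, and let x_CF be an optimal counterfactual of x_F under f with x_CF ≠ x_F. Then there exists λ ∈ ℝ with λ ≠ 0 such that ⟪a, x_CF⟫ = b and λ • a ∈ ∂f(x_CF − x_F). -/

import Mathlib

open Finset

noncomputable section

/-- The standard inner product on `Fin p → ℝ`. -/
def dot {p : ℕ} (a x : Fin p → ℝ) : ℝ := ∑ k, a k * x k

/-- `f` is a norm on `ℝ^p`. -/
def IsNorm {p : ℕ} (f : (Fin p → ℝ) → ℝ) : Prop :=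
  (∀ x, f x = 0 ↔ x = 0) ∧ (∀ (c : ℝ) (x : Fin p → ℝ), f (c • x) = |c| * f x) ∧
    (∀ x y, f (x + y) ≤ f x + f y)

/-- The dual norm `f*(w) = sup { ⟪w, v⟫ : f v ≤ 1 }`. -/
def dualNorm {p : ℕ} (f : (Fin p → ℝ) → ℝ) (w : Fin p → ℝ) : ℝ :=
  sSup {t : ℝ | ∃ v : Fin p → ℝ, f v ≤ 1 ∧ t = dot w v}

/-- `xCF` is an optimal counterfactual of the factual `xF` (classified 'No') under norm `f`. -/
def IsOptCF {p : ℕ} (a : Fin p → ℝ) (b : ℝ) (f : (Fin p → ℝ) → ℝ)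
    (xF xCF : Fin p → ℝ) : Prop :=
  b ≤ dot a xCF ∧ ∀ z : Fin p → ℝ, b ≤ dot a z → f (xCF - xF) ≤ f (z - xF)

/-- `xRCF` is an optimal robust counterfactual of the factual `xF` (classified 'No')
under norm `f`, with robustness norm `g` and radius `ρ`. -/
def IsOptRCF {p : ℕ} (a : Fin p → ℝ) (b : ℝ) (f g : (Fin p → ℝ) → ℝ) (ρ : ℝ)
    (xF xRCF : Fin p → ℝ) : Prop :=
  (∀ s : Fin p → ℝ, g s ≤ ρ → b ≤ dot a (xRCF + s)) ∧
    ∀ z : Fin p → ℝ, (∀ s : Fin p → ℝ, g s ≤ ρ → b ≤ dot a (z + s)) →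
      f (xRCF - xF) ≤ f (z - xF)

/-- `w` is a subgradient of `f` at `x₀`. -/
def IsSubgradient {p : ℕ} (f : (Fin p → ℝ) → ℝ) (x₀ w : Fin p → ℝ) : Prop :=
  ∀ y : Fin p → ℝ, f x₀ + dot w (y - x₀) ≤ f y

/-! Translating by `xF`, the vector `d = xCF - xF` minimises the positively homogeneous `f` over
the half-space `{u | δ ≤ ⟪a, u⟫}` with `δ = b - ⟪a, xF⟫ > 0`. Scaling `d` down shows that
`⟪a, d⟫ = δ`; scaling any `y` with `⟪a, y⟫ > 0` onto the hyperplane gives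
`f d ≤ (δ / ⟪a, y⟫) f y`, which says exactly that `(f d / δ) • a` is a subgradient of `f` at `d`. -/

lemma dot_eq_dotProduct {p : ℕ} (a x : Fin p → ℝ) : dot a x = a ⬝ᵥ x := rfl

namespace IsNorm

variable {p : ℕ} {f : (Fin p → ℝ) → ℝ}

lemma nonneg (hf : IsNorm f) (x : Fin p → ℝ) : 0 ≤ f x := by
  have hzero : f (x + -x) = 0 := (hf.1 _).2 (add_neg_cancel x)
  have hneg : f (-x) = f x := by simpa using hf.2.1 (-1) x
  linarith [hf.2.2 x (-x)]

lemma pos (hf : IsNorm f) {x : Fin p → ℝ} (hx : x ≠ 0) : 0 < f x :=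
  (hf.nonneg x).lt_of_ne fun h => hx ((hf.1 x).1 h.symm)

lemma smul_of_nonneg (hf : IsNorm f) (c : ℝ) (hc : 0 ≤ c) (x : Fin p → ℝ) :
    f (c • x) = c * f x := by
  rw [hf.2.1, abs_of_nonneg hc]

end IsNorm

section HalfSpace

variable {E : Type*} [AddCommGroup E] [Module ℝ E] {f : E → ℝ} {φ : E →ₗ[ℝ] ℝ} {δ : ℝ} {d : E}

-- Off the hyperplane, shrinking `d` towards `0` would stay feasible and lower `f`.
lemma apply_eq_of_isMinOn_halfSpace (hhom : ∀ c : ℝ, 0 ≤ c → ∀ x, f (c • x) = c * f x)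
    (hδ : 0 < δ) (hfd : 0 < f d) (hmin : IsMinOn f {u | δ ≤ φ u} d) (hd : δ ≤ φ d) :
    φ d = δ := by
  by_contra hne
  have hφd : δ < φ d := hd.lt_of_ne' hne
  have ht : 0 < δ / φ d := div_pos hδ (hδ.trans hφd)
  have ht1 : δ / φ d < 1 := (div_lt_one (hδ.trans hφd)).2 hφd
  have hfeas : δ ≤ φ ((δ / φ d) • d) := by
    rw [map_smul, smul_eq_mul, div_mul_cancel₀ _ (hδ.trans hφd).ne']
  have hle := isMinOn_iff.1 hmin _ hfeas
  rw [hhom _ ht.le] at hle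
  exact hle.not_gt (mul_lt_of_lt_one_left hfd ht1)

-- Every `y` with `φ y > 0` rescales onto the hyperplane `{φ = δ}`, where `d` is optimal.
lemma subgradient_of_isMinOn_halfSpace (hnonneg : ∀ x, 0 ≤ f x)
    (hhom : ∀ c : ℝ, 0 ≤ c → ∀ x, f (c • x) = c * f x)
    (hδ : 0 < δ) (hmin : IsMinOn f {u | δ ≤ φ u} d) (hd : φ d = δ) (y : E) :
    f d + f d / δ * φ (y - d) ≤ f y := by
  have hscaled : f d / δ * φ y ≤ f y := by
    rcases le_or_gt (φ y) 0 with hy | hy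
    · exact (mul_nonpos_of_nonneg_of_nonpos (div_nonneg (hnonneg d) hδ.le) hy).trans (hnonneg y)
    · have hc : 0 ≤ δ / φ y := (div_pos hδ hy).le
      have hfeas : δ ≤ φ ((δ / φ y) • y) := by
        rw [map_smul, smul_eq_mul, div_mul_cancel₀ _ hy.ne']
      have hle := isMinOn_iff.1 hmin _ hfeas
      rw [hhom _ hc, div_mul_eq_mul_div, le_div_iff₀ hy] at hle
      rw [div_mul_eq_mul_div, div_le_iff₀ hδ]
      linarith
  calc f d + f d / δ * φ (y - d) = f d / δ * φ y := by
        rw [map_sub, hd]; field_simp; ring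
    _ ≤ f y := hscaled

end HalfSpace

lemma IsOptCF.isMinOn_sub {p : ℕ} {a : Fin p → ℝ} {b : ℝ} {f : (Fin p → ℝ) → ℝ}
    {xF xCF : Fin p → ℝ} (h : IsOptCF a b f xF xCF) :
    IsMinOn f {u | b - dot a xF ≤ dotProductBilin ℝ ℝ a u} (xCF - xF) := fun u hu => by
  have hz : b ≤ dot a (xF + u) := by
    rw [Set.mem_ofPred_eq, dotProductBilin_apply_apply] at hu
    rw [dot_eq_dotProduct, dotProduct_add, ← dot_eq_dotProduct]
    linarith
  simpa using h.2 (xF + u) hz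

theorem cf_optimality_conditions {p : ℕ}
    (f : (Fin p → ℝ) → ℝ) (hf : IsNorm f)
    (a : Fin p → ℝ) (b : ℝ) (xF xCF : Fin p → ℝ)
    (hxF : dot a xF < b) (hopt : IsOptCF a b f xF xCF) (hne : xCF ≠ xF) :
    ∃ l : ℝ, l ≠ 0 ∧ dot a xCF = b ∧ IsSubgradient f (xCF - xF) (l • a) := by
  have hδ : 0 < b - dot a xF := sub_pos.2 hxF
  have hfd : 0 < f (xCF - xF) := hf.pos (sub_ne_zero.2 hne)
  have hdot_sub : dotProductBilin ℝ ℝ a (xCF - xF) = dot a xCF - dot a xF :=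
    dotProduct_sub a xCF xF
  have hboundary := apply_eq_of_isMinOn_halfSpace hf.smul_of_nonneg hδ hfd
    hopt.isMinOn_sub (by rw [hdot_sub]; linarith [hopt.1])
  refine ⟨f (xCF - xF) / (b - dot a xF), (div_pos hfd hδ).ne', by linarith, fun y => ?_⟩
  rw [dot_eq_dotProduct, smul_dotProduct, smul_eq_mul]
  exact subgradient_of_isMinOn_halfSpace hf.nonneg hf.smul_of_nonneg hδ
    hopt.isMinOn_sub hboundary y
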